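/- arXiv:1510.06145 — 7 statements merged into one kernel-verified Lean document; each statement's English description precedes it below -/
import Mathlib

section
/- If P, P1, P2 are polynomials in ℓ variables over a field k with P = P1 * P2 and all nonzero, then the Newton polytope of P equals the Minkowski sum of the Newton polytopes of P1 and P2. -/
/-!
The inclusion `Γ(P₁P₂) ⊆ Γ(P₁) + Γ(P₂)` holds because every exponent of `P₁P₂` is a sum of
exponents of `P₁` and `P₂`. Conversely, a point of `Γ(P₁) + Γ(P₂)` outside `Γ(P₁P₂)` is separated
from it by a linear functional `f`. Take the exponents `m`, `n` of `P₁`, `P₂` that maximise `f`,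
ties broken lexicographically: then `m + n` is obtained in only one way as a sum of exponents, so
its coefficient in `P₁P₂` is the nonzero product of the leading coefficients. Hence `f` attains
on `Γ(P₁P₂)` the value `f m + f n`, its maximum on `Γ(P₁) + Γ(P₂)`, a contradiction.
-/

open MvPolynomial Pointwise

/-- The Newton polytope of a multivariate polynomial: the convex hull in `ℝ^ℓ` of the
exponent vectors of monomials with nonzero coefficient. -/
noncomputable def newtonPolytope {l : ℕ} {k : Type*} [CommSemiring k]
    (P : MvPolynomial (Fin l) k) : Set (Fin l → ℝ) :=
  convexHull ℝ ((fun m : Fin l →₀ ℕ => fun i : Fin l => (m i : ℝ)) ''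
    (P.support : Set (Fin l →₀ ℕ)))

/-- A set `Γ ⊆ ℝ^ℓ` is summable if it is the Minkowski sum of two convex polytopes with
vertices in `ℕ^ℓ`, each having at least two points. -/
def IsSummable {l : ℕ} (Γ : Set (Fin l → ℝ)) : Prop :=
  ∃ A B : Finset (Fin l → ℕ), 2 ≤ A.card ∧ 2 ≤ B.card ∧
    Γ = convexHull ℝ ((fun m : Fin l → ℕ => fun i : Fin l => (m i : ℝ)) '' (A : Set (Fin l → ℕ)))
      + convexHull ℝ ((fun m : Fin l → ℕ => fun i : Fin l => (m i : ℝ)) '' (B : Set (Fin l → ℕ)))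

theorem UniqueAdd.of_forall_map_le {M G : Type*} [Add M] [AddCommMonoid G] [LinearOrder G]
    [IsOrderedCancelAddMonoid G] (D : M →ₙ+ G) (hD : Function.Injective D)
    {A B : Finset M} {a₀ b₀ : M} (hA : ∀ a ∈ A, D a ≤ D a₀) (hB : ∀ b ∈ B, D b ≤ D b₀) :
    UniqueAdd A B a₀ b₀ := by
  intro a b ha hb hab
  replace hab : D a + D b = D a₀ + D b₀ := by rw [← map_add, ← map_add, hab]
  have hDa : D a = D a₀ :=
    (hA a ha).eq_of_not_lt fun h => (add_lt_add_of_lt_of_le h (hB b hb)).ne hab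
  rw [hDa] at hab
  exact ⟨hD hDa, hD (add_left_cancel hab)⟩

namespace MvPolynomial

variable {σ R : Type*} [CommSemiring R]

theorem add_mem_support_mul_of_forall_map_le [NoZeroDivisors R] {G : Type*} [AddCommMonoid G]
    [LinearOrder G] [IsOrderedCancelAddMonoid G] (D : (σ →₀ ℕ) →ₙ+ G)
    (hD : Function.Injective D) {p q : MvPolynomial σ R} {m n : σ →₀ ℕ}
    (hm : m ∈ p.support) (hn : n ∈ q.support)
    (hpm : ∀ a ∈ p.support, D a ≤ D m) (hqn : ∀ b ∈ q.support, D b ≤ D n) :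
    m + n ∈ (p * q).support := by
  rw [mem_support_iff] at hm hn ⊢
  have hcoeff : coeff (m + n) (p * q) = coeff m p * coeff n q :=
    AddMonoidAlgebra.coeff_mul_add_of_uniqueAdd (UniqueAdd.of_forall_map_le D hD hpm hqn)
  rw [hcoeff]
  exact mul_ne_zero hm hn

theorem exists_add_mem_support_mul_of_forall_le [NoZeroDivisors R] {G : Type*} [AddCommMonoid G]
    [LinearOrder G] [IsOrderedCancelAddMonoid G] (φ : (σ →₀ ℕ) →+ G) {p q : MvPolynomial σ R}
    (hp : p.support.Nonempty) (hq : q.support.Nonempty) :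
    ∃ m ∈ p.support, ∃ n ∈ q.support, m + n ∈ (p * q).support ∧
      (∀ a ∈ p.support, φ a ≤ φ m) ∧ ∀ b ∈ q.support, φ b ≤ φ n := by
  -- Breaking the ties of `φ` lexicographically gives an injective key; any linear order on `σ`
  -- will do.
  classical
  let : LinearOrder σ := linearOrderOfSTO WellOrderingRel
  let D : (σ →₀ ℕ) →+ G ×ₗ Lex (σ →₀ ℕ) :=
    { toFun := fun m => toLex (φ m, toLex m)
      map_zero' := by simp
      map_add' := fun a b => by simp only [map_add]; rfl }
  have hD : Function.Injective D := fun a b h =>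
    congrArg (fun x : G ×ₗ Lex (σ →₀ ℕ) => ofLex (ofLex x).2) h
  obtain ⟨m, hm, hpm⟩ := p.support.exists_max_image D hp
  obtain ⟨n, hn, hqn⟩ := q.support.exists_max_image D hq
  refine ⟨m, hm, n, hn, add_mem_support_mul_of_forall_map_le D.toAddHom hD hm hn hpm hqn,
    fun a ha => Prod.Lex.monotone_fst _ _ (hpm a ha),
    fun b hb => Prod.Lex.monotone_fst _ _ (hqn b hb)⟩

def expVec : (σ →₀ ℕ) →+ (σ → ℝ) where
  toFun m i := m i
  map_zero' := by ext; simp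
  map_add' _ _ := by ext; simp

theorem convexHull_support_mul_subset [DecidableEq σ] (p q : MvPolynomial σ R) :
    convexHull ℝ (expVec '' ((p * q).support : Set (σ →₀ ℕ))) ⊆
      convexHull ℝ (expVec '' (p.support : Set (σ →₀ ℕ))) +
        convexHull ℝ (expVec '' (q.support : Set (σ →₀ ℕ))) := by
  rw [← convexHull_add, ← Set.image_add, ← Finset.coe_add]
  exact convexHull_mono (Set.image_mono (support_mul p q))

theorem exists_le_of_mem_convexHull_expVec (f : (σ → ℝ) →ₗ[ℝ] ℝ) {p : MvPolynomial σ R}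
    {y : σ → ℝ} (hy : y ∈ convexHull ℝ (expVec '' (p.support : Set (σ →₀ ℕ)))) :
    ∃ a ∈ p.support, f y ≤ f (expVec a) := by
  obtain ⟨_, ⟨a, ha, rfl⟩, hya⟩ :=
    (f.convexOn convex_univ).exists_ge_of_mem_convexHull (Set.subset_univ _) hy
  exact ⟨a, ha, hya⟩

theorem add_convexHull_subset_convexHull_support_mul [NoZeroDivisors R] (p q : MvPolynomial σ R) :
    convexHull ℝ (expVec '' (p.support : Set (σ →₀ ℕ))) +
        convexHull ℝ (expVec '' (q.support : Set (σ →₀ ℕ))) ⊆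
      convexHull ℝ (expVec '' ((p * q).support : Set (σ →₀ ℕ))) := by
  rintro _ ⟨y, hy, z, hz, rfl⟩
  by_contra hyz
  have hclosed : IsClosed (convexHull ℝ (expVec '' ((p * q).support : Set (σ →₀ ℕ)))) :=
    ((((p * q).support.finite_toSet).image expVec).isCompact_convexHull ℝ).isClosed
  obtain ⟨f, u, hf, hfyz⟩ :=
    geometric_hahn_banach_closed_point (convex_convexHull ℝ _) hclosed hyz
  obtain ⟨a, ha, hya⟩ := exists_le_of_mem_convexHull_expVec f.toLinearMap hy
  obtain ⟨b, hb, hzb⟩ := exists_le_of_mem_convexHull_expVec f.toLinearMap hz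
  obtain ⟨m, hm, n, hn, hmn, hpm, hqn⟩ :=
    exists_add_mem_support_mul_of_forall_le ((f : (σ → ℝ) →+ ℝ).comp expVec) ⟨a, ha⟩ ⟨b, hb⟩
  have hmn_lt : f (expVec m) + f (expVec n) < u := by
    simpa using hf _ (subset_convexHull ℝ _ ⟨m + n, hmn, rfl⟩)
  have hyz_le : f y + f z ≤ f (expVec m) + f (expVec n) :=
    add_le_add (hya.trans (hpm a ha)) (hzb.trans (hqn b hb))
  rw [map_add] at hfyz
  linarith

end MvPolynomial

theorem stmt0_general {l : ℕ} {k : Type*} [Field k] (P P1 P2 : MvPolynomial (Fin l) k)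
    (h : P = P1 * P2) :
    newtonPolytope P = newtonPolytope P1 + newtonPolytope P2 := by
  subst h
  exact (convexHull_support_mul_subset P1 P2).antisymm
    (add_convexHull_subset_convexHull_support_mul P1 P2)

theorem stmt0 {l : ℕ} {k : Type*} [Field k] (P P1 P2 : MvPolynomial (Fin l) k)
    (hP : P ≠ 0) (h1 : P1 ≠ 0) (h2 : P2 ≠ 0) (h : P = P1 * P2) :
    newtonPolytope P = newtonPolytope P1 + newtonPolytope P2 :=
  stmt0_general P P1 P2 h
end

section
/- The polynomial (x - y + 1)(x + y + 1) + 1 is irreducible in ℂ[x,y], even though its Newton polygon coincides with that of (x - y + 1)(x + y + 1), which is summable. -/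
/-!
Substituting `x ↦ x - 1` turns `(x - y + 1)(x + y + 1) + 1 = (x + 1)² - (y² - 1)` into
`x² - (y - 1)(y + 1)`, which as a polynomial in `x` over `ℂ[y]` is Eisenstein at the prime `y - 1`.
The support of `(x - y + 1)(x + y + 1) = x² + 2x + 1 - y²` is `{(2,0), (1,0), (0,0), (0,2)}`, and
adding `1` only changes the constant coefficient from `1` to `2`. Its convex hull is the triangle
`2Δ = Δ + Δ`, where `Δ` is the standard simplex with vertices `(0,0), (1,0), (0,1)`.
-/

open MvPolynomial Pointwise

theorem convexHull_insert_of_mem_convexHull {𝕜 E : Type*} [Semiring 𝕜] [PartialOrder 𝕜]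
    [AddCommMonoid E] [Module 𝕜 E] {s : Set E} {x : E} (hx : x ∈ convexHull 𝕜 s) :
    convexHull 𝕜 (insert x s) = convexHull 𝕜 s :=
  (convexHull_min (Set.insert_subset hx (subset_convexHull 𝕜 s)) (convex_convexHull 𝕜 s)).antisymm
    (convexHull_mono (Set.subset_insert x s))

theorem convexHull_add_convexHull_self {𝕜 E : Type*} [Field 𝕜] [LinearOrder 𝕜]
    [IsStrictOrderedRing 𝕜] [AddCommGroup E] [Module 𝕜 E] (s : Set E) :
    convexHull 𝕜 s + convexHull 𝕜 s = convexHull 𝕜 ((2 : 𝕜) • s) := by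
  rw [convexHull_smul, ← one_add_one_eq_two,
    (convex_convexHull 𝕜 s).add_smul zero_le_one zero_le_one, one_smul]

theorem natCast_comp_piSingle {σ : Type*} [DecidableEq σ] (a : σ) (n : ℕ) :
    (fun i => ((Pi.single a n : σ → ℕ) i : ℝ)) = Pi.single a (n : ℝ) :=
  funext (Pi.apply_single (fun _ (k : ℕ) => (k : ℝ)) (fun _ => Nat.cast_zero) a n)

namespace Polynomial

theorem X_pow_sub_C_irreducible_of_dvd_of_not_sq_dvd {R : Type*} [CommRing R] [IsDomain R]
    {n : ℕ} (hn : n ≠ 0) {p c : R} (hp : Prime p) (hpc : p ∣ c) (hpc2 : ¬ p ^ 2 ∣ c) :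
    Irreducible (X ^ n - C c : R[X]) := by
  have hmonic := monic_X_pow_sub_C c hn
  have hdeg : (X ^ n - C c : R[X]).natDegree = n := natDegree_X_pow_sub_C
  refine IsEisensteinAt.irreducible (𝓟 := Ideal.span {p}) ⟨?_, ?_, ?_⟩
    ((Ideal.span_singleton_prime hp.ne_zero).mpr hp) hmonic.isPrimitive
    (hdeg.symm ▸ Nat.pos_of_ne_zero hn)
  · rw [hmonic.leadingCoeff, Ideal.mem_span_singleton]
    exact hp.not_dvd_one
  · intro k hk
    rw [hdeg] at hk
    rw [coeff_sub, coeff_X_pow, if_neg hk.ne, coeff_C, zero_sub, Ideal.neg_mem_iff]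
    split_ifs
    · exact Ideal.mem_span_singleton.mpr hpc
    · exact zero_mem _
  · rwa [Ideal.span_singleton_pow, Ideal.mem_span_singleton, coeff_sub, coeff_X_pow,
      if_neg (Ne.symm hn), coeff_C_zero, zero_sub, dvd_neg]

theorem X_sq_sub_C_X_sq_sub_one_irreducible {R : Type*} [CommRing R] [IsDomain R]
    [NeZero (2 : R)] : Irreducible (X ^ 2 - C (X ^ 2 - 1) : R[X][X]) := by
  have hfactor : (X ^ 2 - 1 : R[X]) = (X - C 1) * (X + C 1) := by
    rw [C_1]; ring
  refine X_pow_sub_C_irreducible_of_dvd_of_not_sq_dvd two_ne_zero (prime_X_sub_C 1)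
    ⟨X + C 1, hfactor⟩ ?_
  rw [hfactor, pow_two, mul_dvd_mul_iff_left (X_sub_C_ne_zero 1), dvd_iff_isRoot]
  simpa [one_add_one_eq_two] using two_ne_zero

end Polynomial

theorem MvPolynomial.support_add_C_of_coeff_zero {σ R : Type*} [CommSemiring R]
    {p : MvPolynomial σ R} {a : R} (h₀ : coeff 0 p ≠ 0) (ha : coeff 0 p + a ≠ 0) :
    (p + C a).support = p.support := by
  classical
  ext m
  rw [mem_support_iff, mem_support_iff, coeff_add, coeff_C]
  split_ifs with hm
  · subst hm
    exact iff_of_true ha h₀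
  · rw [add_zero]

theorem newtonPolytope_add_C_of_coeff_zero {l : ℕ} {k : Type*} [CommSemiring k]
    {P : MvPolynomial (Fin l) k} {a : k} (h₀ : coeff 0 P ≠ 0) (ha : coeff 0 P + a ≠ 0) :
    newtonPolytope (P + C a) = newtonPolytope P := by
  rw [newtonPolytope, newtonPolytope, support_add_C_of_coeff_zero h₀ ha]

noncomputable def linePair (R : Type*) [CommRing R] : MvPolynomial (Fin 2) R :=
  (X 0 - X 1 + 1) * (X 0 + X 1 + 1)

section linePair

variable {R : Type*} [CommRing R]

theorem irreducible_linePair_add_one [IsDomain R] [NeZero (2 : R)] :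
    Irreducible (linePair R + 1) := by
  have h : (Polynomial.Bivariate.equivMvPolynomial R).symm
      (rename (Equiv.swap 0 1) (linePair R + 1)) =
      Polynomial.taylor 1 (Polynomial.X ^ 2 - Polynomial.C (Polynomial.X ^ 2 - 1)) := by
    simp [linePair]
    ring
  rw [← MulEquiv.irreducible_iff (renameEquiv R (Equiv.swap 0 1)),
    ← MulEquiv.irreducible_iff (Polynomial.Bivariate.equivMvPolynomial R).symm]
  exact h ▸ Polynomial.X_sq_sub_C_X_sq_sub_one_irreducible.map (Polynomial.taylorEquiv (1 : Polynomial R))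

theorem coeff_zero_linePair : coeff 0 (linePair R) = 1 := by
  simp [← constantCoeff_eq, linePair]

theorem newtonPolytope_linePair_add_one [NeZero (2 : R)] :
    newtonPolytope (linePair R + 1) = newtonPolytope (linePair R) := by
  have : Nontrivial R := nontrivial_of_ne 2 0 two_ne_zero
  rw [← C_1, newtonPolytope_add_C_of_coeff_zero] <;> rw [coeff_zero_linePair]
  · exact one_ne_zero
  · rw [one_add_one_eq_two]
    exact two_ne_zero

theorem support_linePair [NeZero (2 : R)] :
    (linePair R).support =
      {Finsupp.single 0 2, Finsupp.single 0 1, 0, Finsupp.single 1 2} := by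
  have h : linePair R = monomial (Finsupp.single 0 2) 1 + monomial (Finsupp.single 0 1) 2
      + monomial 0 1 - monomial (Finsupp.single 1 2) 1 := by
    simp only [linePair, ← C_mul_X_pow_eq_monomial, monomial_zero', pow_one, C_1, map_ofNat]
    ring
  have : Nontrivial R := nontrivial_of_ne 2 0 two_ne_zero
  ext m
  simp only [h, mem_support_iff, coeff_add, coeff_sub, coeff_monomial, Finset.mem_insert,
    Finset.mem_singleton]
  by_cases h1 : Finsupp.single 0 2 = m <;> by_cases h2 : Finsupp.single 0 1 = m <;>
    by_cases h3 : 0 = m <;> by_cases h4 : Finsupp.single 1 2 = m <;> subst_vars <;>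
    simp_all [Finsupp.single_eq_single_iff, eq_comm, (two_ne_zero : (2 : R) ≠ 0).symm]

theorem newtonPolytope_linePair [NeZero (2 : R)] :
    newtonPolytope (linePair R) =
      convexHull ℝ ((2 : ℝ) • ({Pi.single 0 1, 0, Pi.single 1 1} : Set (Fin 2 → ℝ))) := by
  have hmid : (Pi.single 0 1 : Fin 2 → ℝ) ∈ segment ℝ 0 (Pi.single 0 2) :=
    ⟨1 / 2, 1 / 2, by norm_num, by norm_num, by norm_num, by
      rw [smul_zero, zero_add, ← Pi.single_smul]; norm_num⟩
  rw [newtonPolytope, support_linePair]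
  simp only [Finset.coe_insert, Finset.coe_singleton, Set.image_insert_eq, Set.image_singleton,
    Finsupp.single_eq_pi_single, natCast_comp_piSingle, Finsupp.coe_zero, Pi.zero_apply,
    Nat.cast_zero, ← Pi.zero_def, Set.smul_set_insert, Set.smul_set_singleton, smul_zero,
    ← Pi.single_smul, smul_eq_mul, mul_one, Nat.cast_ofNat, Nat.cast_one]
  rw [Set.insert_comm, convexHull_insert_of_mem_convexHull]
  exact segment_subset_convexHull (by simp) (by simp) hmid

theorem isSummable_newtonPolytope_linePair [NeZero (2 : R)] :
    IsSummable (newtonPolytope (linePair R)) := by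
  refine ⟨{Pi.single 0 1, 0, Pi.single 1 1}, {Pi.single 0 1, 0, Pi.single 1 1}, by decide,
    by decide, ?_⟩
  rw [newtonPolytope_linePair, ← convexHull_add_convexHull_self]
  simp [Set.image_insert_eq, natCast_comp_piSingle, ← Pi.zero_def]

end linePair

theorem stmt2 :
    Irreducible ((X 0 - X 1 + 1) * (X 0 + X 1 + 1) + 1 : MvPolynomial (Fin 2) ℂ) ∧
    newtonPolytope ((X 0 - X 1 + 1) * (X 0 + X 1 + 1) + 1 : MvPolynomial (Fin 2) ℂ) =
      newtonPolytope ((X 0 - X 1 + 1) * (X 0 + X 1 + 1) : MvPolynomial (Fin 2) ℂ) ∧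
    IsSummable (newtonPolytope ((X 0 - X 1 + 1) * (X 0 + X 1 + 1) : MvPolynomial (Fin 2) ℂ)) :=
  ⟨irreducible_linePair_add_one, newtonPolytope_linePair_add_one,
    isSummable_newtonPolytope_linePair⟩
end

section
/- Let k be an algebraically closed field and p, q positive coprime integers. Then for every t* ∈ k, the polynomial x^p - y^q - t* is irreducible in k[x,y] (i.e., the spectrum of x^p - y^q - t is empty). -/
/-!
As a polynomial in `y` over `k(x)`, `x ^ p - y ^ q - t` is `-(Y ^ q - a)` with `a = x ^ p - t`
of degree `p`, coprime to `q`. If `β ^ q = a`, the norm `N` of `β` from `k(x)(β)` satisfies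
`N ^ q = a ^ d` with `d = [k(x)(β) : k(x)]`; comparing degrees gives `q ∣ d p`, hence `q ∣ d`,
so `Y ^ q - a` is the minimal polynomial of `β`. Gauss's lemma brings irreducibility back to
`k[x][y]`.
-/

open MvPolynomial

section

open Polynomial IntermediateField

theorem Polynomial.X_pow_sub_C_irreducible_of_forall_pow_eq_pow_dvd {K : Type*} [Field K] {n : ℕ}
    (hn : n ≠ 0) {a : K} (ha : ∀ (d : ℕ) (b : K), b ^ n = a ^ d → n ∣ d) :
    Irreducible (X ^ n - C a : _[X]) := by
  obtain ⟨β, hβ⟩ :=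
    IsAlgClosed.exists_pow_nat_eq (algebraMap K (AlgebraicClosure K) a) hn.bot_lt
  have hint : IsIntegral K β := Algebra.IsIntegral.isIntegral β
  have hdvd : minpoly K β ∣ X ^ n - C a := minpoly.dvd K β (by simp [hβ])
  -- The norm of `β` down from `K⟮β⟯` is an `n`-th root of `a ^ [K⟮β⟯ : K]`.
  have hn_dvd : n ∣ (minpoly K β).natDegree := by
    rw [← adjoin.finrank hint]
    refine ha _ (Algebra.norm K (AdjoinSimple.gen K β)) ?_
    rw [← map_pow, ← Algebra.norm_algebraMap (S := K⟮β⟯)]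
    congr 1
    exact Subtype.ext (by simpa using hβ)
  have hdeg : (X ^ n - C a).natDegree ≤ (minpoly K β).natDegree := by
    rw [natDegree_X_pow_sub_C]
    exact Nat.le_of_dvd (minpoly.natDegree_pos hint) hn_dvd
  rw [eq_of_monic_of_dvd_of_natDegree_le (minpoly.monic hint) (monic_X_pow_sub_C a hn) hdvd hdeg]
  exact minpoly.irreducible hint

theorem RatFunc.intDegree_pow {F : Type*} [Field F] {x : RatFunc F} (hx : x ≠ 0) (n : ℕ) :
    (x ^ n).intDegree = n * x.intDegree := by
  induction n with
  | zero => simp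
  | succ n ih =>
    rw [pow_succ, RatFunc.intDegree_mul (pow_ne_zero _ hx) hx, ih]
    push_cast
    ring

theorem Polynomial.X_pow_sub_C_irreducible_of_isCoprime_intDegree {F : Type*} [Field F] {n : ℕ}
    (hn : n ≠ 0) {a : RatFunc F} (ha : a ≠ 0) (hna : IsCoprime (n : ℤ) a.intDegree) :
    Irreducible (X ^ n - C a : _[X]) := by
  refine X_pow_sub_C_irreducible_of_forall_pow_eq_pow_dvd hn fun d b hb ↦ ?_
  have hb0 : b ≠ 0 := by
    rintro rfl
    exact pow_ne_zero d ha (by rw [← hb, zero_pow hn])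
  have hdeg := congrArg RatFunc.intDegree hb
  rw [RatFunc.intDegree_pow hb0, RatFunc.intDegree_pow ha] at hdeg
  exact Int.natCast_dvd_natCast.mp (hna.dvd_of_dvd_mul_right ⟨_, hdeg.symm⟩)

theorem Polynomial.X_pow_sub_C_irreducible_of_coprime_natDegree {F : Type*} [Field F] {n : ℕ}
    (hn : n ≠ 0) {a : F[X]} (ha : a ≠ 0) (hna : n.Coprime a.natDegree) :
    Irreducible (X ^ n - C a : _[X]) := by
  rw [(monic_X_pow_sub_C a hn).irreducible_iff_irreducible_map_fraction_map (K := RatFunc F)]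
  simp only [Polynomial.map_sub, Polynomial.map_pow, map_X, map_C]
  refine Polynomial.X_pow_sub_C_irreducible_of_isCoprime_intDegree hn ?_ ?_
  · exact (map_ne_zero_iff _ (IsFractionRing.injective F[X] (RatFunc F))).mpr ha
  · rwa [RatFunc.intDegree_polynomial, Nat.isCoprime_iff_coprime]

end

theorem stmt3_general {k : Type*} [Field k] (p q : ℕ) (hp : 0 < p) (hq : 0 < q)
    (hpq : Nat.Coprime p q) (t : k) :
    Irreducible (X 0 ^ p - X 1 ^ q - C t : MvPolynomial (Fin 2) k) := by
  have hirr : Irreducible (.X ^ q - .C (.X ^ p - .C t) : Polynomial (Polynomial k)) :=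
    Polynomial.X_pow_sub_C_irreducible_of_coprime_natDegree hq.ne'
      (Polynomial.X_pow_sub_C_ne_zero hp t)
      (by rwa [Polynomial.natDegree_X_pow_sub_C, Nat.coprime_comm])
  have hmap : Polynomial.Bivariate.equivMvPolynomial k (-(.X ^ q - .C (.X ^ p - .C t)))
      = X 0 ^ p - X 1 ^ q - C t := by
    simp only [map_neg, map_sub, map_pow, Polynomial.Bivariate.equivMvPolynomial_C_X,
      Polynomial.Bivariate.equivMvPolynomial_C_C, Polynomial.Bivariate.equivMvPolynomial_X]
    ring
  rw [← hmap, MulEquiv.irreducible_iff]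
  exact Associated.irreducible ⟨-1, mul_neg_one _⟩ hirr

theorem stmt3 {k : Type*} [Field k] [IsAlgClosed k] (p q : ℕ) (hp : 0 < p) (hq : 0 < q)
    (hpq : Nat.Coprime p q) (t : k) :
    Irreducible (X 0 ^ p - X 1 ^ q - C t : MvPolynomial (Fin 2) k) :=
  stmt3_general p q hp hq hpq t
end

section
/- Let k be an algebraically closed field, d ≥ 2, and t1*, ..., t_{d-1}* ∈ k distinct. The polynomial P(x,y) = y(x - t1*)···(x - t_{d-1}*) + x is indecomposable: P cannot be written as h(A(x,y)) with A ∈ k[x,y] and h ∈ k[u] of degree ≥ 2. -/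
/-!
Over a domain, `deg_y (h ∘ A) = deg h · deg_y A`, while `P` has degree one in `y` because its
coefficient `∏ (x - tⱼ)` is nonzero; hence `deg h = 1`.
-/

open MvPolynomial

theorem Polynomial.natDegree_aeval_eq_mul {R S : Type*} [CommSemiring R] [CommSemiring S]
    [NoZeroDivisors S] [Algebra R S] [FaithfulSMul R S] (p : Polynomial R) (q : Polynomial S) :
    (Polynomial.aeval q p).natDegree = p.natDegree * q.natDegree := by
  rw [← Polynomial.aeval_map_algebraMap S, ← Polynomial.comp_eq_aeval, Polynomial.natDegree_comp,
    Polynomial.natDegree_map_eq_of_injective (FaithfulSMul.algebraMap_injective R S)]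

namespace MvPolynomial

section CommSemiring

variable {σ R : Type*} [CommSemiring R]

theorem degreeOf_aeval [NoZeroDivisors R] (i : σ) (p : Polynomial R) (A : MvPolynomial σ R) :
    degreeOf i (Polynomial.aeval A p) = p.natDegree * degreeOf i A := by
  classical
  let φ := (optionEquivLeft R {j // j ≠ i}).toAlgHom.comp (rename (Equiv.optionSubtypeNe i).symm)
  have hφ (f : MvPolynomial σ R) :
      optionEquivLeft R _ (rename (Equiv.optionSubtypeNe i).symm f) = φ f := rfl
  rw [degreeOf_eq_natDegree, degreeOf_eq_natDegree, hφ, hφ, ← Polynomial.aeval_algHom_apply,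
    Polynomial.natDegree_aeval_eq_mul]

theorem degreeOf_X_mul_add_eq_one [NoZeroDivisors R] [Nontrivial R] {i : σ}
    {f g : MvPolynomial σ R} (hf : f ≠ 0) (hfi : degreeOf i f = 0) (hgi : degreeOf i g = 0) :
    degreeOf i (X i * f + g) = 1 := by
  have hXf : degreeOf i (X i * f) = 1 := by
    rw [degreeOf_mul_eq (X_ne_zero i) hf, degreeOf_X_self, hfi]
  rw [degreeOf_add_eq_of_degreeOf_lt (by omega), hXf]

end CommSemiring

section CommRing

variable {σ R : Type*} [CommRing R]

theorem X_sub_C_ne_zero [Nontrivial R] (i : σ) (c : R) : (X i - C c : MvPolynomial σ R) ≠ 0 := by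
  rw [sub_ne_zero]
  intro h
  simpa using congrArg (degreeOf i) h

theorem degreeOf_X_sub_C_of_ne {i j : σ} (hij : i ≠ j) (c : R) :
    degreeOf i (X j - C c : MvPolynomial σ R) = 0 :=
  Nat.eq_zero_of_le_zero <| (degreeOf_sub_le i _ _).trans <| by
    rw [degreeOf_X_of_ne hij, degreeOf_C, max_self]

end CommRing

end MvPolynomial

theorem stmt6_general {k : Type*} [Field k] (d : ℕ)
    (t : Fin (d - 1) → k) :
    ¬ ∃ (h : Polynomial k) (A : MvPolynomial (Fin 2) k), 2 ≤ h.natDegree ∧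
      (X 1 * ∏ j, (X 0 - C (t j)) + X 0 : MvPolynomial (Fin 2) k) = Polynomial.aeval A h := by
  rintro ⟨h, A, hdeg, hP⟩
  have h10 : (1 : Fin 2) ≠ 0 := by decide
  have hprod_deg : degreeOf 1 (∏ j, (X 0 - C (t j)) : MvPolynomial (Fin 2) k) = 0 :=
    Nat.eq_zero_of_le_zero <| (degreeOf_prod_le _ _ _).trans <| by
      simp only [degreeOf_X_sub_C_of_ne h10, Finset.sum_const_zero, le_refl]
  have hP_deg := degreeOf_X_mul_add_eq_one
    (Finset.prod_ne_zero_iff.2 fun j _ => X_sub_C_ne_zero 0 (t j)) hprod_deg (degreeOf_X_of_ne h10)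
  rw [hP, degreeOf_aeval] at hP_deg
  have := Nat.eq_one_of_mul_eq_one_right hP_deg
  omega

theorem stmt6 {k : Type*} [Field k] [IsAlgClosed k] (d : ℕ) (hd : 2 ≤ d)
    (t : Fin (d - 1) → k) (ht : Function.Injective t) :
    ¬ ∃ (h : Polynomial k) (A : MvPolynomial (Fin 2) k), 2 ≤ h.natDegree ∧
      (X 1 * ∏ j, (X 0 - C (t j)) + X 0 : MvPolynomial (Fin 2) k) = Polynomial.aeval A h :=
  stmt6_general d t
end

section
/- (Gao's first criterion) Let P ∈ k[x1,...,xℓ] be a polynomial whose Newton polytope Γ(P) is contained in an affine hyperplane H ⊂ ℝ^ℓ not passing through the origin. Let v1, ..., vk be the vertices of Γ(P). Then Γ₀(P), the convex hull of supp(P) ∪ {0}, is not summable if and only if the gcd of all coordinates of all the vertices v1, ..., vk equals 1. -/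
open MvPolynomial Pointwise

/-- `Γ₀(P)`: the convex hull of the support of `P` together with the origin. -/
noncomputable def newtonPolytope0 {l : ℕ} {k : Type*} [CommSemiring k]
    (P : MvPolynomial (Fin l) k) : Set (Fin l → ℝ) :=
  convexHull ℝ (insert 0 ((fun m : Fin l →₀ ℕ => fun i : Fin l => (m i : ℝ)) ''
    (P.support : Set (Fin l →₀ ℕ))))

/-- The gcd of all coordinates of all vertices (extreme points) of `Γ` equals `1`. -/
def VertexGcdOne {l : ℕ} (Γ : Set (Fin l → ℝ)) : Prop :=
  ∀ d : ℕ, (∀ v ∈ Set.extremePoints ℝ Γ, ∀ i : Fin l, ∃ n : ℤ, v i = (d : ℝ) * n) → d = 1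

/-!
The support `S ⊆ ℕ^ℓ` lies in a hyperplane `f = 1`, so `Γ₀ = conv ({0} ∪ S)` is the cone over
`Γ = conv S` cut off at height one. If `d ≥ 2` divides every vertex coordinate of `Γ`, then
`Γ₀ = (1/d) Γ₀ + ((d - 1)/d) Γ₀` with both summands integral polytopes.

Conversely let `Γ₀ = conv X + conv Y` with `X, Y ⊆ ℕ^ℓ`. Since `0` is a vertex of the orthant,
`0 ∈ X ∩ Y`. For a vertex `v` of `Γ` the edge `[0, v]` is a face of `Γ₀`, hence the sum of the
faces of `conv X` and `conv Y` in the same direction, which are segments `[0, s v]` and `[0, t v]`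
with `s + t ≥ 1`. Comparing heights gives `s = max_X f`, which does not depend on `v`. So a fixed
`s ∈ (0, 1)` maps every vertex into `ℕ^ℓ`, and the denominator of `s` divides all vertex
coordinates.
-/

open Set

section Convex

variable {E : Type*} [AddCommGroup E] [Module ℝ E]

theorem LinearMap.apply_le_of_mem_convexHull {s : Set E} {f : E →ₗ[ℝ] ℝ} {M : ℝ}
    (hs : ∀ y ∈ s, f y ≤ M) {x : E} (hx : x ∈ convexHull ℝ s) : f x ≤ M :=
  convexHull_min hs (convex_halfSpace_le f.isLinear M) hx

theorem mem_convexHull_sep_of_apply_eq {s : Set E} {f : E →ₗ[ℝ] ℝ} {M : ℝ}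
    (hs : ∀ y ∈ s, f y ≤ M) {x : E} (hx : x ∈ convexHull ℝ s) (hfx : f x = M) :
    x ∈ convexHull ℝ {y ∈ s | f y = M} := by
  -- a proper convex combination attains the maximum `M` of `f` only if both endpoints do
  let D := {z ∈ convexHull ℝ s | f z = M → z ∈ convexHull ℝ {y ∈ s | f y = M}}
  have hD : Convex ℝ D := by
    rintro y ⟨hy, hyM⟩ z ⟨hz, hzM⟩ a b ha hb hab
    refine ⟨convex_convexHull ℝ s hy hz ha hb hab, fun h => ?_⟩
    have hfy := f.apply_le_of_mem_convexHull hs hy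
    have hfz := f.apply_le_of_mem_convexHull hs hz
    rw [map_add, map_smul, map_smul, smul_eq_mul, smul_eq_mul] at h
    have hsum : a * (M - f y) + b * (M - f z) = 0 := by linear_combination M * hab - h
    have hy0 := mul_nonneg ha (sub_nonneg.2 hfy)
    have hz0 := mul_nonneg hb (sub_nonneg.2 hfz)
    rcases ha.eq_or_lt with rfl | ha
    · obtain rfl : b = 1 := by linarith
      simpa using hzM (by linarith)
    rcases hb.eq_or_lt with rfl | hb
    · obtain rfl : a = 1 := by linarith
      simpa using hyM (by linarith)
    have hfy' : f y = M :=
      (sub_eq_zero.1 ((mul_eq_zero.1 (by linarith : a * (M - f y) = 0)).resolve_left ha.ne')).symm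
    have hfz' : f z = M :=
      (sub_eq_zero.1 ((mul_eq_zero.1 (by linarith : b * (M - f z) = 0)).resolve_left hb.ne')).symm
    exact convex_convexHull ℝ _ (hyM hfy') (hzM hfz') ha.le hb.le hab
  have hsD : s ⊆ D := fun y hy =>
    ⟨subset_convexHull ℝ s hy, fun h => subset_convexHull ℝ _ (mem_sep hy h)⟩
  exact (convexHull_min hsD hD hx).2 hfx

theorem convexHull_eq_add_natCast_smul (V : Set E) {d : ℕ} (hd : d ≠ 0) :
    convexHull ℝ V =
      convexHull ℝ ((d : ℝ)⁻¹ • V) + convexHull ℝ (((d - 1 : ℕ) : ℝ) • (d : ℝ)⁻¹ • V) := by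
  have hd' : (1 : ℝ) + (d - 1 : ℕ) = d := by
    rw [Nat.cast_sub (by omega), Nat.cast_one, add_sub_cancel]
  set K := (d : ℝ)⁻¹ • convexHull ℝ V
  calc convexHull ℝ V = (1 + ((d - 1 : ℕ) : ℝ)) • K := by
        rw [hd', smul_inv_smul₀ (Nat.cast_ne_zero.2 hd)]
    _ = K + ((d - 1 : ℕ) : ℝ) • K := by
        rw [((convex_convexHull ℝ V).smul _).add_smul zero_le_one (Nat.cast_nonneg _), one_smul]
    _ = _ := by rw [convexHull_smul, convexHull_smul, convexHull_smul]

end Convex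

section Ordered

variable {E : Type*} [AddCommGroup E] [PartialOrder E] [IsOrderedAddMonoid E] [Module ℝ E]
  [PosSMulMono ℝ E]

theorem zero_mem_extremePoints_Ici : (0 : E) ∈ (Ici 0).extremePoints ℝ := by
  refine mem_extremePoints.2 ⟨le_rfl, fun x hx y hy ⟨a, b, ha, hb, _, hxy⟩ => ?_⟩
  have hax := smul_nonneg ha.le (mem_Ici.1 hx)
  have hby := smul_nonneg hb.le (mem_Ici.1 hy)
  obtain ⟨hax0, hby0⟩ := (add_eq_zero_iff_of_nonneg hax hby).1 hxy
  exact ⟨(smul_eq_zero.1 hax0).resolve_left ha.ne', (smul_eq_zero.1 hby0).resolve_left hb.ne'⟩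

theorem zero_mem_of_zero_mem_convexHull {X : Set E} (hX : X ⊆ Ici 0)
    (h : (0 : E) ∈ convexHull ℝ X) : (0 : E) ∈ X :=
  extremePoints_convexHull_subset <| inter_extremePoints_subset_extremePoints_of_subset
    (convexHull_min hX (convex_Ici 0)) ⟨h, zero_mem_extremePoints_Ici⟩

theorem zero_mem_of_zero_mem_convexHull_add {X Y : Set E} (hX : X ⊆ Ici 0) (hY : Y ⊆ Ici 0)
    (h : (0 : E) ∈ convexHull ℝ X + convexHull ℝ Y) : (0 : E) ∈ X := by
  obtain ⟨a, ha, b, hb, hab⟩ := h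
  have ha0 := convexHull_min hX (convex_Ici 0) ha
  have hb0 := convexHull_min hY (convex_Ici 0) hb
  obtain rfl := ((add_eq_zero_iff_of_nonneg ha0 hb0).1 hab).1
  exact zero_mem_of_zero_mem_convexHull hX ha

end Ordered

section Polytope

variable {E : Type*} [AddCommGroup E] [Module ℝ E] [TopologicalSpace E] [T2Space E]
  [IsTopologicalAddGroup E] [ContinuousSMul ℝ E] [LocallyConvexSpace ℝ E] {S : Set E}

theorem Set.Finite.convexHull_extremePoints_convexHull (hS : S.Finite) :
    convexHull ℝ ((convexHull ℝ S).extremePoints ℝ) = convexHull ℝ S := by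
  have h := closure_convexHull_extremePoints (hS.isCompact_convexHull ℝ) (convex_convexHull ℝ S)
  rwa [((hS.subset extremePoints_convexHull_subset).isClosed_convexHull ℝ).closure_eq] at h

theorem exists_ne_zero_mem_extremePoints_convexHull (hS : S.Finite) (hSne : S.Nonempty)
    {f : E →ₗ[ℝ] ℝ} (hf : ∀ s ∈ S, f s = 1) : ∃ v ∈ (convexHull ℝ S).extremePoints ℝ, v ≠ 0 := by
  obtain ⟨v, hv⟩ := (hS.isCompact_convexHull ℝ).extremePoints_nonempty
    (convexHull_nonempty_iff.2 hSne)
  exact ⟨v, hv, fun h => by simpa [h] using hf v (extremePoints_convexHull_subset hv)⟩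

theorem exists_forall_lt_of_mem_extremePoints_convexHull (hS : S.Finite) {v : E}
    (hv : v ∈ (convexHull ℝ S).extremePoints ℝ) :
    ∃ φ : StrongDual ℝ E, ∀ s ∈ S, s ≠ v → φ s < φ v := by
  have hv' : v ∉ convexHull ℝ (S \ {v}) := fun h =>
    ((convex_convexHull ℝ S).mem_extremePoints_iff_mem_sdiff_convexHull_sdiff.1 hv).2 <|
      convexHull_mono (sdiff_subset_sdiff_left (subset_convexHull ℝ S)) h
  obtain ⟨φ, u, hφ, hu⟩ := geometric_hahn_banach_closed_point (convex_convexHull ℝ _)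
    (hS.sdiff.isClosed_convexHull ℝ) hv'
  exact ⟨φ, fun s hs hsv => (hφ s (subset_convexHull ℝ _ ⟨hs, hsv⟩)).trans hu⟩

end Polytope

section ConeOverPolytope

variable {E : Type*} [AddCommGroup E] [Module ℝ E] {S : Set E} {f : E →ₗ[ℝ] ℝ}

theorem apply_le_one_of_mem_convexHull_insert_zero (hf : ∀ s ∈ S, f s = 1) {x : E}
    (hx : x ∈ convexHull ℝ (insert 0 S)) : f x ≤ 1 :=
  f.apply_le_of_mem_convexHull (by
    rintro y (rfl | hy)
    · simp
    · exact (hf y hy).le) hx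

theorem pos_of_mem_convexHull_insert_zero (hf : ∀ s ∈ S, f s = 1) {x : E}
    (hx : x ∈ convexHull ℝ (insert 0 S)) (hx0 : x ≠ 0) : 0 < f x := by
  have hT : ∀ y ∈ insert 0 S, (-f) y ≤ 0 := by
    rintro y (rfl | hy)
    · simp
    · simp [hf y hy]
  refine lt_of_le_of_ne (by simpa using (-f).apply_le_of_mem_convexHull hT hx) fun h => hx0 ?_
  have hface : {y ∈ insert 0 S | (-f) y = 0} ⊆ {0} := by
    rintro y ⟨rfl | hy, hy0⟩
    · rfl
    · simp [hf y hy] at hy0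
  simpa using convexHull_mono hface
    (mem_convexHull_sep_of_apply_eq hT hx (by simp [← h]))

theorem apply_nonpos_of_mem_convexHull_insert_zero {ψ : E →ₗ[ℝ] ℝ} {v : E}
    (hψ : ∀ s ∈ S, s ≠ v → ψ s < 0) (hψv : ψ v = 0) {x : E}
    (hx : x ∈ convexHull ℝ (insert 0 S)) : ψ x ≤ 0 :=
  ψ.apply_le_of_mem_convexHull (by
    rintro y (rfl | hy)
    · simp
    · rcases eq_or_ne y v with rfl | hyv
      exacts [hψv.le, (hψ y hy hyv).le]) hx

theorem exists_apply_eq_zero_of_forall_lt (hf : ∀ s ∈ S, f s = 1) {v : E} (hv : v ∈ S)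
    {φ : E →ₗ[ℝ] ℝ} (hφ : ∀ s ∈ S, s ≠ v → φ s < φ v) :
    ∃ ψ : E →ₗ[ℝ] ℝ, (∀ s ∈ S, s ≠ v → ψ s < 0) ∧ ψ v = 0 :=
  ⟨φ - φ v • f, fun s hs hsv => by simpa [hf s hs] using hφ s hs hsv, by simp [hf v hv]⟩

theorem eq_smul_of_mem_convexHull_insert_zero {ψ : E →ₗ[ℝ] ℝ} {v : E}
    (hψ : ∀ s ∈ S, s ≠ v → ψ s < 0) (hψv : ψ v = 0) (hfv : f v = 1) {x : E}
    (hx : x ∈ convexHull ℝ (insert 0 S)) (hψx : ψ x = 0) : x = f x • v := by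
  have hface : {y ∈ insert 0 S | ψ y = 0} ⊆ {0, v} := by
    rintro y ⟨rfl | hy, hy0⟩
    · exact mem_insert _ _
    · rcases eq_or_ne y v with rfl | hyv
      exacts [mem_insert_of_mem _ rfl, absurd hy0 (hψ y hy hyv).ne]
  obtain ⟨a, b, -, -, -, rfl⟩ : x ∈ segment ℝ 0 v := by
    rw [← convexHull_pair]
    refine convexHull_mono hface (mem_convexHull_sep_of_apply_eq (fun y hy => ?_) hx hψx)
    exact apply_nonpos_of_mem_convexHull_insert_zero hψ hψv (subset_convexHull ℝ _ hy)
  simp [hfv]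

theorem exists_mem_eq_smul_of_apply_eq_zero {X : Set E} (hX : X.Finite) {ψ : E →ₗ[ℝ] ℝ}
    {v : E} (hψX : ∀ x ∈ X, ψ x ≤ 0) (hXv : ∀ x ∈ X, ψ x = 0 → x = f x • v) {a : E}
    (ha : a ∈ convexHull ℝ X) (hψa : ψ a = 0) :
    ∃ x₀ ∈ X, f a ≤ f x₀ ∧ x₀ = f x₀ • v := by
  have ha₀ := mem_convexHull_sep_of_apply_eq hψX ha hψa
  obtain ⟨x₀, ⟨hx₀, hψx₀⟩, hmax⟩ := exists_max_image _ f (hX.subset (sep_subset _ _))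
    (convexHull_nonempty_iff.1 ⟨a, ha₀⟩)
  exact ⟨x₀, hx₀, f.apply_le_of_mem_convexHull hmax ha₀, hXv x₀ hx₀ hψx₀⟩

theorem smul_mem_of_convexHull_insert_zero_eq_add {X Y : Set E} (hX : X.Finite)
    (hY : Y.Finite) (h0X : (0 : E) ∈ X) (h0Y : (0 : E) ∈ Y)
    (hsum : convexHull ℝ (insert 0 S) = convexHull ℝ X + convexHull ℝ Y)
    (hf : ∀ s ∈ S, f s = 1) {x' : E} (hx' : x' ∈ X) (hmax : ∀ x ∈ X, f x ≤ f x')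
    {v : E} (hv : v ∈ S) {ψ : E →ₗ[ℝ] ℝ} (hψ : ∀ s ∈ S, s ≠ v → ψ s < 0) (hψv : ψ v = 0) :
    f x' • v ∈ X := by
  have hXT : ∀ x ∈ convexHull ℝ X, x ∈ convexHull ℝ (insert 0 S) := fun x hx => by
    simpa [hsum] using add_mem_add hx (subset_convexHull ℝ Y h0Y)
  have hYT : ∀ y ∈ convexHull ℝ Y, y ∈ convexHull ℝ (insert 0 S) := fun y hy => by
    simpa [hsum] using add_mem_add (subset_convexHull ℝ X h0X) hy
  have hψT := fun z => apply_nonpos_of_mem_convexHull_insert_zero (x := z) hψ hψv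
  have hseg := fun z => eq_smul_of_mem_convexHull_insert_zero (x := z) hψ hψv (hf v hv)
  obtain ⟨a, ha, b, hb, hab⟩ : v ∈ convexHull ℝ X + convexHull ℝ Y :=
    hsum ▸ subset_convexHull ℝ _ (mem_insert_of_mem 0 hv)
  replace hab : a + b = v := hab
  have hψab : ψ a + ψ b = 0 := by rw [← map_add, hab, hψv]
  have hψa := hψT a (hXT a ha)
  have hψb := hψT b (hYT b hb)
  obtain ⟨x₀, hx₀, hax₀, hx₀v⟩ := exists_mem_eq_smul_of_apply_eq_zero hX
    (fun x hx => hψT x (hXT x (subset_convexHull ℝ X hx)))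
    (fun x hx => hseg x (hXT x (subset_convexHull ℝ X hx))) ha (by linarith)
  obtain ⟨y₀, hy₀, hby₀, -⟩ := exists_mem_eq_smul_of_apply_eq_zero hY
    (fun y hy => hψT y (hYT y (subset_convexHull ℝ Y hy)))
    (fun y hy => hseg y (hYT y (subset_convexHull ℝ Y hy))) hb (by linarith)
  have hfab : f a + f b = 1 := by rw [← map_add, hab, hf v hv]
  have hx'y₀ : f x' + f y₀ ≤ 1 := by
    rw [← map_add]
    refine apply_le_one_of_mem_convexHull_insert_zero hf ?_
    rw [hsum]
    exact add_mem_add (subset_convexHull ℝ X hx') (subset_convexHull ℝ Y hy₀)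
  -- `1 = f a + f b ≤ f x₀ + f y₀ ≤ f x' + f y₀ ≤ 1` squeezes `f x₀` to `f x'`.
  have hx₀x' := hmax x₀ hx₀
  rwa [show f x' = f x₀ by linarith, ← hx₀v]

end ConeOverPolytope

theorem Rat.den_dvd_of_mul_eq_intCast {q : ℚ} {m n : ℤ} (h : q * m = n) : (q.den : ℤ) ∣ m := by
  rcases eq_or_ne m 0 with rfl | hm
  · exact dvd_zero _
  · rw [eq_div_of_mul_eq (by exact_mod_cast hm) h, ← Rat.divInt_eq_div]
    exact Rat.den_dvd n m

section NatPoints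

def natPoints (ι : Type*) : Set (ι → ℝ) := range fun m : ι → ℕ => fun i => (m i : ℝ)

variable {ι : Type*}

theorem mem_natPoints {x : ι → ℝ} : x ∈ natPoints ι ↔ ∀ i, ∃ n : ℕ, x i = n :=
  ⟨by rintro ⟨m, rfl⟩ i; exact ⟨m i, rfl⟩,
    fun h => ⟨fun i => (h i).choose, funext fun i => (h i).choose_spec.symm⟩⟩

theorem natPoints_subset_Ici : natPoints ι ⊆ Ici 0 := by
  rintro _ ⟨m, rfl⟩ i
  exact Nat.cast_nonneg (m i)

theorem zero_mem_natPoints : (0 : ι → ℝ) ∈ natPoints ι := ⟨0, by ext; simp⟩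

theorem natCast_smul_mem_natPoints (k : ℕ) {x : ι → ℝ} (hx : x ∈ natPoints ι) :
    (k : ℝ) • x ∈ natPoints ι := by
  obtain ⟨m, rfl⟩ := hx
  exact ⟨k • m, by ext; simp⟩

theorem inv_smul_mem_natPoints {d : ℕ} {x : ι → ℝ} (hx : x ∈ natPoints ι)
    (hd : ∀ i, ∃ n : ℤ, x i = d * n) : (d : ℝ)⁻¹ • x ∈ natPoints ι := by
  rw [mem_natPoints] at hx ⊢
  intro i
  obtain ⟨m, hm⟩ := hx i
  obtain ⟨n, hn⟩ := hd i
  obtain ⟨k, rfl⟩ : d ∣ m := Int.natCast_dvd_natCast.1 ⟨n, by exact_mod_cast hm.symm.trans hn⟩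
  rcases eq_or_ne d 0 with rfl | hd0
  · exact ⟨0, by simp⟩
  · exact ⟨k, by simp [hm, hd0]⟩

theorem exists_ne_one_forall_dvd_of_smul_mem_natPoints {V : Set (ι → ℝ)} (hV : V ⊆ natPoints ι)
    {r : ℝ} (hr0 : 0 < r) (hr1 : r < 1) (hrV : ∀ v ∈ V, r • v ∈ natPoints ι) {v₀ : ι → ℝ}
    (hv₀ : v₀ ∈ V) (hv₀0 : v₀ ≠ 0) :
    ∃ d : ℕ, d ≠ 1 ∧ ∀ v ∈ V, ∀ i, ∃ n : ℤ, v i = d * n := by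
  have hcoord : ∀ v ∈ V, ∀ i, ∃ m n : ℕ, v i = m ∧ r * m = n := fun v hv i => by
    obtain ⟨m, hm⟩ := mem_natPoints.1 (hV hv) i
    obtain ⟨n, hn⟩ := mem_natPoints.1 (hrV v hv) i
    exact ⟨m, n, hm, by simpa [hm] using hn⟩
  obtain ⟨i₀, hi₀⟩ := Function.ne_iff.1 hv₀0
  obtain ⟨m₀, n₀, hm₀, hn₀⟩ := hcoord v₀ hv₀ i₀
  have hm₀0 : (m₀ : ℝ) ≠ 0 := by simpa [hm₀] using hi₀
  set q : ℚ := n₀ / m₀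
  have hq : (q : ℝ) = r := by simp [q, ← hn₀, hm₀0]
  refine ⟨q.den, fun hden => ?_, fun v hv i => ?_⟩
  · rw [Rat.den_eq_one_iff] at hden
    rw [← hq, ← hden] at hr0 hr1
    have h0 : 0 < q.num := by exact_mod_cast hr0
    have h1 : q.num < 1 := by exact_mod_cast hr1
    omega
  · obtain ⟨m, n, hm, hn⟩ := hcoord v hv i
    obtain ⟨k, hk⟩ := Rat.den_dvd_of_mul_eq_intCast (q := q) (m := m) (n := n)
      (by rw [← hq] at hn; exact_mod_cast hn)
    exact ⟨k, by rw [hm]; exact_mod_cast hk⟩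

end NatPoints

theorem isSummable_iff {l : ℕ} {Γ : Set (Fin l → ℝ)} :
    IsSummable Γ ↔ ∃ X Y : Set (Fin l → ℝ), X.Finite ∧ Y.Finite ∧ X ⊆ natPoints (Fin l) ∧
      Y ⊆ natPoints (Fin l) ∧ X.Nontrivial ∧ Y.Nontrivial ∧
      Γ = convexHull ℝ X + convexHull ℝ Y := by
  set ι := fun m : Fin l → ℕ => fun i : Fin l => (m i : ℝ)
  have hι : Function.Injective ι := fun m m' h => funext fun i => by
    simpa [ι] using congrFun h i
  have hcard {A : Finset (Fin l → ℕ)} : 2 ≤ A.card ↔ (ι '' A).Nontrivial := by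
    rw [Nat.succ_le_iff, Finset.one_lt_card_iff_nontrivial]
    exact ⟨fun h => h.image hι, nontrivial_of_image ι _⟩
  constructor
  · rintro ⟨A, B, hA, hB, rfl⟩
    exact ⟨_, _, A.finite_toSet.image ι, B.finite_toSet.image ι, image_subset_range _ _,
      image_subset_range _ _, hcard.1 hA, hcard.1 hB, rfl⟩
  · rintro ⟨X, Y, hX, hY, hXnat, hYnat, hXnt, hYnt, rfl⟩
    have hpre {Z : Set (Fin l → ℝ)} (hZ : Z.Finite) (hZnat : Z ⊆ natPoints (Fin l)) :
        ι '' (hZ.preimage hι.injOn).toFinset = Z := by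
      simpa using image_preimage_eq_of_subset hZnat
    refine ⟨_, _, hcard.2 ((hpre hX hXnat).symm ▸ hXnt), hcard.2 ((hpre hY hYnat).symm ▸ hYnt),
      by rw [hpre hX hXnat, hpre hY hYnat]⟩

section Summability

variable {l : ℕ} {S : Set (Fin l → ℝ)} {f : (Fin l → ℝ) →ₗ[ℝ] ℝ}

theorem isSummable_convexHull_insert_zero_of_not_vertexGcdOne (hS : S.Finite)
    (hSne : S.Nonempty) (hSnat : S ⊆ natPoints (Fin l)) (hf : ∀ s ∈ S, f s = 1)
    (h : ¬ VertexGcdOne (convexHull ℝ S)) : IsSummable (convexHull ℝ (insert 0 S)) := by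
  simp only [VertexGcdOne, not_forall] at h
  obtain ⟨d, hd, hd1⟩ := h
  set V := (convexHull ℝ S).extremePoints ℝ
  obtain ⟨v₁, hv₁, hv₁0⟩ := exists_ne_zero_mem_extremePoints_convexHull hS hSne hf
  have hd0 : d ≠ 0 := by
    rintro rfl
    exact hv₁0 (funext fun i => by simpa using (hd v₁ hv₁ i).choose_spec)
  have hdR : (d : ℝ) ≠ 0 := by exact_mod_cast hd0
  have hd1R : ((d - 1 : ℕ) : ℝ) ≠ 0 := by exact_mod_cast (by omega : d - 1 ≠ 0)
  have hVfin : (insert 0 V).Finite := (hS.subset extremePoints_convexHull_subset).insert 0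
  have hVnt : (insert 0 V).Nontrivial :=
    nontrivial_of_mem_mem_ne (mem_insert 0 V) (mem_insert_of_mem 0 hv₁) hv₁0.symm
  set X := (d : ℝ)⁻¹ • insert 0 V with hX
  have hXnat : X ⊆ natPoints (Fin l) := by
    rintro _ ⟨x, rfl | hx, rfl⟩
    · simpa using zero_mem_natPoints
    · exact inv_smul_mem_natPoints (hSnat (extremePoints_convexHull_subset hx)) (hd x hx)
  have hXnt : X.Nontrivial := by
    rw [hX, ← image_smul]
    exact hVnt.image (smul_right_injective _ (inv_ne_zero hdR))
  have hdecomp : convexHull ℝ (insert 0 S) =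
      convexHull ℝ X + convexHull ℝ (((d - 1 : ℕ) : ℝ) • X) := by
    rw [convexHull_insert hSne, ← hS.convexHull_extremePoints_convexHull,
      ← convexHull_insert ⟨v₁, hv₁⟩]
    exact convexHull_eq_add_natCast_smul _ hd0
  refine isSummable_iff.2 ⟨X, _, hVfin.smul_set, hVfin.smul_set.smul_set, hXnat,
    ?_, hXnt, ?_, hdecomp⟩
  · rintro _ ⟨x, hx, rfl⟩
    exact natCast_smul_mem_natPoints _ (hXnat hx)
  · rw [← image_smul]
    exact hXnt.image (smul_right_injective _ hd1R)

theorem not_vertexGcdOne_of_isSummable_convexHull_insert_zero (hS : S.Finite)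
    (hSne : S.Nonempty) (hSnat : S ⊆ natPoints (Fin l)) (hf : ∀ s ∈ S, f s = 1)
    (h : IsSummable (convexHull ℝ (insert 0 S))) : ¬ VertexGcdOne (convexHull ℝ S) := by
  obtain ⟨X, Y, hX, hY, hXnat, hYnat, hXnt, hYnt, hsum⟩ := isSummable_iff.1 h
  have hmem : ∀ x ∈ X, ∀ y ∈ Y, x + y ∈ convexHull ℝ (insert 0 S) := fun x hx y hy =>
    hsum ▸ add_mem_add (subset_convexHull ℝ X hx) (subset_convexHull ℝ Y hy)
  have h00 : (0 : Fin l → ℝ) ∈ convexHull ℝ X + convexHull ℝ Y :=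
    hsum ▸ subset_convexHull ℝ _ (mem_insert 0 S)
  have hX0 := hXnat.trans natPoints_subset_Ici
  have hY0 := hYnat.trans natPoints_subset_Ici
  have h0X := zero_mem_of_zero_mem_convexHull_add hX0 hY0 h00
  have h0Y := zero_mem_of_zero_mem_convexHull_add hY0 hX0 (add_comm (convexHull ℝ X) _ ▸ h00)
  obtain ⟨x', hx', hmax⟩ := exists_max_image X f hX hXnt.nonempty
  obtain ⟨x, hx, hx0⟩ := hXnt.exists_ne 0
  obtain ⟨y, hy, hy0⟩ := hYnt.exists_ne 0
  have hfx := pos_of_mem_convexHull_insert_zero hf (by simpa using hmem x hx 0 h0Y) hx0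
  have hfy := pos_of_mem_convexHull_insert_zero hf (by simpa using hmem 0 h0X y hy) hy0
  have hfx'y := apply_le_one_of_mem_convexHull_insert_zero hf (hmem x' hx' y hy)
  rw [map_add] at hfx'y
  have hsmul : ∀ v ∈ (convexHull ℝ S).extremePoints ℝ, f x' • v ∈ natPoints (Fin l) := by
    intro v hv
    have hvS := extremePoints_convexHull_subset hv
    obtain ⟨φ, hφ⟩ := exists_forall_lt_of_mem_extremePoints_convexHull hS hv
    obtain ⟨ψ, hψ, hψv⟩ := exists_apply_eq_zero_of_forall_lt hf hvS (φ := φ.toLinearMap) hφ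
    exact hXnat (smul_mem_of_convexHull_insert_zero_eq_add hX hY h0X h0Y hsum hf hx' hmax
      hvS hψ hψv)
  obtain ⟨v₁, hv₁, hv₁0⟩ := exists_ne_zero_mem_extremePoints_convexHull hS hSne hf
  obtain ⟨d, hd1, hd⟩ := exists_ne_one_forall_dvd_of_smul_mem_natPoints
    (extremePoints_convexHull_subset.trans hSnat) (by linarith [hmax x hx]) (by linarith) hsmul
    hv₁ hv₁0
  exact fun h => hd1 (h d hd)

end Summability

theorem stmt9_general {l : ℕ} {k : Type*} [Field k] (P : MvPolynomial (Fin l) k) (hP : P ≠ 0)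
    (w : Fin l → ℝ) (c : ℝ) (hc : c ≠ 0)
    (hH : ∀ v ∈ newtonPolytope P, ∑ i, w i * v i = c) :
    ¬ IsSummable (newtonPolytope0 P) ↔ VertexGcdOne (newtonPolytope P) := by
  set S := (fun m : Fin l →₀ ℕ => fun i : Fin l => (m i : ℝ)) '' (P.support : Set (Fin l →₀ ℕ))
  have hS : S.Finite := P.support.finite_toSet.image _
  have hSne : S.Nonempty := (Finset.coe_nonempty.2 (support_nonempty.2 hP)).image _
  have hSnat : S ⊆ natPoints (Fin l) := by
    rintro _ ⟨m, -, rfl⟩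
    exact ⟨m, rfl⟩
  let f : (Fin l → ℝ) →ₗ[ℝ] ℝ := c⁻¹ • ∑ i, w i • LinearMap.proj i
  have hf : ∀ s ∈ S, f s = 1 := fun s hs => by
    simp [f, hH s (subset_convexHull ℝ S hs), hc]
  exact ⟨not_imp_comm.1 (isSummable_convexHull_insert_zero_of_not_vertexGcdOne hS hSne hSnat hf),
    fun h h' => not_vertexGcdOne_of_isSummable_convexHull_insert_zero hS hSne hSnat hf h' h⟩

theorem stmt9 {l : ℕ} {k : Type*} [Field k] (P : MvPolynomial (Fin l) k) (hP : P ≠ 0)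
    (w : Fin l → ℝ) (c : ℝ) (hw : w ≠ 0) (hc : c ≠ 0)
    (hH : ∀ v ∈ newtonPolytope P, ∑ i, w i * v i = c) :
    ¬ IsSummable (newtonPolytope0 P) ↔ VertexGcdOne (newtonPolytope P) :=
  stmt9_general P hP w c hc hH
end

section
/- Let k be an algebraically closed field and p, q, r pairwise setwise coprime positive integers (gcd(p,q,r) = 1 suffices when p,q,r are pairwise arbitrary but globally coprime). Let Q(x,y,z) = Σ a_{ijk} x^i y^j z^k where the sum is over triples with i/p + j/q + k/r < 1 and a_{000} ≠ 0. Then for every t* ∈ k with t* ≠ 0, the polynomial x^p + y^q + z^r + t* Q(x,y,z) is irreducible in k[x,y,z]. -/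
/-!
With the weights `(qr, pr, pq)` on `(x, y, z)`, the Brieskorn polynomial `x^p + y^q + z^r` is
weighted homogeneous of degree `pqr`, and the condition on the support of `Q` says exactly that
every monomial of `Q` has weight `< pqr`. Over a domain the top weighted homogeneous component
is multiplicative and detects units, so a polynomial is irreducible as soon as its top component
is. It remains to see that `x^p + y^q + z^r` is irreducible: some exponent, say `p`, is odd, and
viewed as `X^p - a` over `R[y, z]` with `a = -(y^q + z^r)`, Capelli's criterion for odd exponents
and Gauss's lemma reduce this to `a` not being a `d`-th power for `1 < d ∣ p`; but
`y^q + z^r = b^d` forces `d ∣ q` and `d ∣ r` (set `z = 0`, resp. `y = 0`), against `gcd = 1`.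
-/

open MvPolynomial

theorem Polynomial.X_pow_sub_C_irreducible_of_odd_of_isIntegrallyClosed {A : Type*} [CommRing A]
    [IsDomain A] [IsIntegrallyClosed A] {n : ℕ} (hn : Odd n) {a : A}
    (ha : ∀ d, d ∣ n → d ≠ 1 → ∀ b : A, b ^ d ≠ a) :
    Irreducible (X ^ n - C a) := by
  rw [(monic_X_pow_sub_C a hn.pos.ne').irreducible_iff_irreducible_map_fraction_map
    (K := FractionRing A), Polynomial.map_sub, Polynomial.map_pow, map_X, map_C,
    X_pow_sub_C_irreducible_iff_of_odd hn]
  intro d hd hd1 b hb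
  have hint : IsIntegral A b :=
    ⟨X ^ d - C a, monic_X_pow_sub_C a (Nat.pos_of_dvd_of_pos hd hn.pos).ne', by simp [hb]⟩
  obtain ⟨c, rfl⟩ := IsIntegrallyClosed.isIntegral_iff.mp hint
  exact ha d hd hd1 c (IsFractionRing.injective A (FractionRing A) (by rw [map_pow, hb]))

namespace MvPolynomial

variable {σ R : Type*}

section CommSemiring

variable [CommSemiring R] (w : σ → ℕ)

theorem weightedHomogeneousComponent_mul_of_weightedTotalDegree_le {f g : MvPolynomial σ R}
    {m n : ℕ} (hf : weightedTotalDegree w f ≤ m) (hg : weightedTotalDegree w g ≤ n) :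
    weightedHomogeneousComponent w (m + n) (f * g) =
      weightedHomogeneousComponent w m f * weightedHomogeneousComponent w n g := by
  classical
  ext d
  simp only [coeff_weightedHomogeneousComponent, coeff_mul, Finset.ite_sum_zero]
  refine Finset.sum_congr rfl fun x hx => ?_
  rw [Finset.HasAntidiagonal.mem_antidiagonal] at hx
  by_cases hfx : coeff x.1 f = 0
  · simp [hfx]
  by_cases hgx : coeff x.2 g = 0
  · simp [hgx]
  have h1 := (le_weightedTotalDegree w (mem_support_iff.mpr hfx)).trans hf
  have h2 := (le_weightedTotalDegree w (mem_support_iff.mpr hgx)).trans hg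
  have hd : Finsupp.weight w d = Finsupp.weight w x.1 + Finsupp.weight w x.2 := by
    rw [← hx, map_add]
  split_ifs <;> first | rfl | (exfalso; omega) | simp

theorem weightedHomogeneousComponent_weightedTotalDegree_ne_zero {f : MvPolynomial σ R}
    (hf : f ≠ 0) : weightedHomogeneousComponent w (weightedTotalDegree w f) f ≠ 0 := by
  classical
  obtain ⟨d, hd, hmax⟩ :=
    Finset.exists_mem_eq_sup f.support (support_nonempty.mpr hf) (Finsupp.weight w)
  rw [Ne, ← support_eq_empty, support_weightedHomogeneousComponent]
  exact Finset.nonempty_iff_ne_empty.mp ⟨d, Finset.mem_filter.mpr ⟨hd, hmax.symm⟩⟩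


theorem weightedTotalDegree_mul_le (f g : MvPolynomial σ R) :
    weightedTotalDegree w (f * g) ≤ weightedTotalDegree w f + weightedTotalDegree w g := by
  classical
  refine Finset.sup_le fun d hd => ?_
  obtain ⟨a, ha, b, hb, rfl⟩ := Finset.mem_add.mp (support_mul f g hd)
  rw [map_add]
  exact add_le_add (le_weightedTotalDegree w ha) (le_weightedTotalDegree w hb)

theorem IsWeightedHomogeneous.weightedTotalDegree_eq {f : MvPolynomial σ R} {n : ℕ}
    (h : IsWeightedHomogeneous w f n) (hf : f ≠ 0) : weightedTotalDegree w f = n :=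
  WithBot.coe_injective <| by rw [← weightedTotalDegree_coe w f hf, h.weighted_total_degree hf]

theorem weightedTotalDegree_one_eq_zero : weightedTotalDegree w (1 : MvPolynomial σ R) = 0 :=
  isWeightedHomogeneous_zero_iff_weightedTotalDegree_eq_zero.mp (isWeightedHomogeneous_one R w)

end CommSemiring

section Domain

variable [CommRing R] [IsDomain R] (w : σ → ℕ)

theorem weightedTotalDegree_mul {f g : MvPolynomial σ R} (hf : f ≠ 0) (hg : g ≠ 0) :
    weightedTotalDegree w (f * g) = weightedTotalDegree w f + weightedTotalDegree w g := by
  refine (weightedTotalDegree_mul_le w f g).antisymm (not_lt.mp fun hlt => ?_)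
  apply mul_ne_zero (weightedHomogeneousComponent_weightedTotalDegree_ne_zero w hf)
    (weightedHomogeneousComponent_weightedTotalDegree_ne_zero w hg)
  rw [← weightedHomogeneousComponent_mul_of_weightedTotalDegree_le w le_rfl le_rfl]
  exact weightedHomogeneousComponent_eq_zero _ _ hlt

noncomputable def weightedTopComponent : MvPolynomial σ R →*₀ MvPolynomial σ R where
  toFun f := weightedHomogeneousComponent w (weightedTotalDegree w f) f
  map_zero' := map_zero _
  map_one' := by
    rw [weightedTotalDegree_one_eq_zero]
    exact weightedHomogeneousComponent_eq_self (isWeightedHomogeneous_one R w)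
  map_mul' f g := by
    rcases eq_or_ne f 0 with rfl | hf
    · simp
    rcases eq_or_ne g 0 with rfl | hg
    · simp
    simp only [weightedTotalDegree_mul w hf hg]
    exact weightedHomogeneousComponent_mul_of_weightedTotalDegree_le w le_rfl le_rfl

theorem weightedTopComponent_apply (f : MvPolynomial σ R) :
    weightedTopComponent w f = weightedHomogeneousComponent w (weightedTotalDegree w f) f :=
  rfl

theorem weightedTopComponent_ne_zero {f : MvPolynomial σ R} (hf : f ≠ 0) :
    weightedTopComponent w f ≠ 0 :=
  weightedHomogeneousComponent_weightedTotalDegree_ne_zero w hf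

instance : IsLocalHom (weightedTopComponent (R := R) w) where
  map_nonunit f h := by
    obtain ⟨g, hg⟩ := h.exists_right_inv
    have hf : f ≠ 0 := by rintro rfl; simp at hg
    have hg0 : g ≠ 0 := by rintro rfl; simp at hg
    have htop : IsWeightedHomogeneous w (weightedTopComponent w f) (weightedTotalDegree w f) :=
      weightedHomogeneousComponent_isWeightedHomogeneous _ _
    -- degrees add up to that of `1`, so `f` has weighted degree `0` and is its own top component
    have hdeg := congrArg (weightedTotalDegree w) hg
    rw [weightedTotalDegree_mul w (weightedTopComponent_ne_zero w hf) hg0,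
      htop.weightedTotalDegree_eq w (weightedTopComponent_ne_zero w hf),
      weightedTotalDegree_one_eq_zero] at hdeg
    have hf0 : IsWeightedHomogeneous w f 0 :=
      isWeightedHomogeneous_zero_iff_weightedTotalDegree_eq_zero.mpr (by omega)
    rwa [weightedTopComponent_apply, hf0.weightedTotalDegree_eq w hf,
      weightedHomogeneousComponent_eq_self hf0] at h

theorem weightedTopComponent_add_of_lt {f g : MvPolynomial σ R} {n : ℕ}
    (hf : IsWeightedHomogeneous w f n) (hf0 : f ≠ 0) (hg : weightedTotalDegree w g < n) :
    weightedTopComponent w (f + g) = f := by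
  classical
  have hcomp : weightedHomogeneousComponent w n (f + g) = f := by
    rw [map_add, weightedHomogeneousComponent_eq_self hf,
      weightedHomogeneousComponent_eq_zero _ _ hg, add_zero]
  have hdeg : weightedTotalDegree w (f + g) = n := by
    refine le_antisymm (Finset.sup_le fun d hd => ?_) (not_lt.mp fun hlt => ?_)
    · rcases Finset.mem_union.mp (support_add hd) with hd | hd
      · exact (hf (mem_support_iff.mp hd)).le
      · exact ((le_weightedTotalDegree w hd).trans_lt hg).le
    · exact hf0 (hcomp ▸ weightedHomogeneousComponent_eq_zero _ _ hlt)
  rw [weightedTopComponent_apply, hdeg, hcomp]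

end Domain

theorem dvd_of_pow_eq_X_pow_add_X_pow [CommRing R] [IsDomain R]
    {i j : σ} (hij : i ≠ j) {d q r : ℕ} (hr : 0 < r) {f : MvPolynomial σ R}
    (h : f ^ d = X i ^ q + X j ^ r) : d ∣ q := by
  classical
  have hf : (aeval (Pi.single i (Polynomial.X : Polynomial R)) f) ^ d = Polynomial.X ^ q := by
    rw [← map_pow, h]
    simp [hij.symm, zero_pow hr.ne']
  exact ⟨_, by simpa using congrArg Polynomial.natDegree hf |>.symm⟩

theorem irreducible_X_pow_add_X_pow_add_X_pow_of_odd [CommRing R] [IsDomain R]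
    [UniqueFactorizationMonoid R] {p q r : ℕ} (hp : Odd p) (hq : 0 < q) (hr : 0 < r)
    (hgcd : Nat.gcd p (Nat.gcd q r) = 1) :
    Irreducible (X 0 ^ p + X 1 ^ q + X 2 ^ r : MvPolynomial (Fin 3) R) := by
  have himg : finSuccEquiv R 2 (X 0 ^ p + X 1 ^ q + X 2 ^ r) =
      Polynomial.X ^ p - Polynomial.C (-(X 0 ^ q + X 1 ^ r)) := by
    simp only [map_add, map_pow, map_neg, finSuccEquiv_X_zero,
      show (1 : Fin 3) = Fin.succ 0 from rfl, show (2 : Fin 3) = Fin.succ 1 from rfl,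
      finSuccEquiv_X_succ]
    ring
  rw [← MulEquiv.irreducible_iff (finSuccEquiv R 2), himg]
  refine Polynomial.X_pow_sub_C_irreducible_of_odd_of_isIntegrallyClosed hp
    fun d hd hd1 b hb => hd1 ?_
  have hb' : (-b) ^ d = X 0 ^ q + X 1 ^ r := by rw [(hp.of_dvd_nat hd).neg_pow, hb, neg_neg]
  have hdq := dvd_of_pow_eq_X_pow_add_X_pow (by decide) hr hb'
  have hdr := dvd_of_pow_eq_X_pow_add_X_pow (by decide) hq (hb'.trans (add_comm _ _))
  rw [← Nat.dvd_one, ← hgcd]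
  exact Nat.dvd_gcd hd (Nat.dvd_gcd hdq hdr)

theorem irreducible_X_pow_add_X_pow_add_X_pow [CommRing R] [IsDomain R]
    [UniqueFactorizationMonoid R] {p q r : ℕ} (hp : 0 < p) (hq : 0 < q) (hr : 0 < r)
    (hgcd : Nat.gcd p (Nat.gcd q r) = 1) :
    Irreducible (X 0 ^ p + X 1 ^ q + X 2 ^ r : MvPolynomial (Fin 3) R) := by
  obtain hp' | hq' | hr' : Odd p ∨ Odd q ∨ Odd r := by
    by_contra! h
    simp only [Nat.not_odd_iff_even] at h
    have h2 := Nat.dvd_gcd h.1.two_dvd (Nat.dvd_gcd h.2.1.two_dvd h.2.2.two_dvd)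
    rw [hgcd] at h2
    omega
  · exact irreducible_X_pow_add_X_pow_add_X_pow_of_odd hp' hq hr hgcd
  · convert (irreducible_X_pow_add_X_pow_add_X_pow_of_odd (R := R) hq' hp hr
      (by rw [← hgcd]; ac_rfl)).map (renameEquiv R (Equiv.swap 0 1)) using 1
    simp [Equiv.swap_apply_of_ne_of_ne]
    ring
  · convert (irreducible_X_pow_add_X_pow_add_X_pow_of_odd (R := R) hr' hq hp
      (by rw [← hgcd]; ac_rfl)).map (renameEquiv R (Equiv.swap 0 2)) using 1
    simp [Equiv.swap_apply_of_ne_of_ne]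
    ring

theorem isWeightedHomogeneous_X_pow_add_X_pow_add_X_pow (R : Type*) [CommSemiring R]
    (p q r : ℕ) :
    IsWeightedHomogeneous ![q * r, p * r, p * q]
      (X 0 ^ p + X 1 ^ q + X 2 ^ r : MvPolynomial (Fin 3) R) (p * q * r) := by
  have hX (i : Fin 3) (e : ℕ) (h : e • ![q * r, p * r, p * q] i = p * q * r) :
      IsWeightedHomogeneous ![q * r, p * r, p * q] (X i ^ e : MvPolynomial (Fin 3) R)
        (p * q * r) :=
    h ▸ (isWeightedHomogeneous_X R _ i).pow e
  exact ((hX 0 p (by simp; ring)).add (hX 1 q (by simp; ring))).add (hX 2 r (by simp; ring))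

end MvPolynomial

theorem Finsupp.weight_lt_of_sum_div_lt_one {p q r : ℕ} (hp : 0 < p) (hq : 0 < q) (hr : 0 < r)
    {d : Fin 3 →₀ ℕ} (hd : (d 0 : ℚ) / p + (d 1 : ℚ) / q + (d 2 : ℚ) / r < 1) :
    weight ![q * r, p * r, p * q] d < p * q * r := by
  have hweight : weight ![q * r, p * r, p * q] d =
      d 0 * (q * r) + d 1 * (p * r) + d 2 * (p * q) := by
    simp [weight_apply, Finsupp.sum_fintype, Fin.sum_univ_three]
  rw [hweight]
  have : ((d 0 : ℚ) / p + (d 1 : ℚ) / q + (d 2 : ℚ) / r) * (p * q * r) < 1 * (p * q * r) :=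
    mul_lt_mul_of_pos_right hd (by positivity)
  qify
  convert this using 1 <;> field_simp

theorem stmt11_general {k : Type*} [Field k] (p q r : ℕ)
    (hp : 0 < p) (hq : 0 < q) (hr : 0 < r) (hgcd : Nat.gcd p (Nat.gcd q r) = 1)
    (Q : MvPolynomial (Fin 3) k)
    (hQ : ∀ m ∈ Q.support, (m 0 : ℚ) / p + (m 1 : ℚ) / q + (m 2 : ℚ) / r < 1)
    (t : k) :
    Irreducible (X 0 ^ p + X 1 ^ q + X 2 ^ r + C t * Q : MvPolynomial (Fin 3) k) := by
  have hB := irreducible_X_pow_add_X_pow_add_X_pow (R := k) hp hq hr hgcd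
  have hdeg : weightedTotalDegree ![q * r, p * r, p * q] (C t * Q) < p * q * r := by
    refine (Finset.sup_lt_iff (by positivity)).mpr fun d hd => ?_
    rw [← smul_eq_C_mul] at hd
    exact Finsupp.weight_lt_of_sum_div_lt_one hp hq hr (hQ d (support_smul hd))
  refine Irreducible.of_map (f := weightedTopComponent ![q * r, p * r, p * q]) ?_
  rwa [weightedTopComponent_add_of_lt _ (isWeightedHomogeneous_X_pow_add_X_pow_add_X_pow k p q r)
    hB.ne_zero hdeg]

theorem stmt11 {k : Type*} [Field k] [IsAlgClosed k] (p q r : ℕ)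
    (hp : 0 < p) (hq : 0 < q) (hr : 0 < r) (hgcd : Nat.gcd p (Nat.gcd q r) = 1)
    (Q : MvPolynomial (Fin 3) k)
    (hQ : ∀ m ∈ Q.support, (m 0 : ℚ) / p + (m 1 : ℚ) / q + (m 2 : ℚ) / r < 1)
    (h0 : MvPolynomial.coeff 0 Q ≠ 0) (t : k) (ht : t ≠ 0) :
    Irreducible (X 0 ^ p + X 1 ^ q + X 2 ^ r + C t * Q : MvPolynomial (Fin 3) k) :=
  stmt11_general p q r hp hq hr hgcd Q hQ t
end

section
/- Let k be an algebraically closed field and F ∈ k[t1,...,ts][x1,...,xℓ] with ℓ ≥ 2, irreducible over the algebraic closure of k(t1,...,ts). Then the set of (t1*,...,ts*) ∈ k^s such that F(t*,x) has full degree d = deg_x F and is reducible in k[x1,...,xℓ] is contained in a proper Zariski-closed subset of k^s; in particular there exists a nonzero h ∈ k[t1,...,ts] such that h(t*) ≠ 0 and deg F(t*,·) = d imply F(t*,x) is irreducible in k[x]. -/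
/-!
Fix a monomial `α` of degree `e` with `0 < e < d = deg F`. The factorizations `F = G * H` with
`deg G ≤ e`, `deg H ≤ d - e` and `G` normalized by `coeff α G = 1` are the zeros of an ideal of
polynomials over `A = k[t]` in the unknown coefficients of `G` and `H`. Irreducibility of `F` over
the algebraic closure `L` of `K = Frac A` says this ideal has no zero over `L`, so by the
Nullstellensatz it becomes the unit ideal over `K`, and clearing denominators puts a nonzero
constant `b ∈ A` into it. A factorization of a specialization `F(t*, x)` is a zero of the
specialized ideal, which forces `b(t*) = 0`. Every reducible specialization of full degree has a
factorization normalized in this way, so `h` is the product of the finitely many `b`.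
-/

open MvPolynomial

noncomputable section

namespace MvPolynomial

section Degree

variable {σ R : Type*}

theorem totalDegree_map_of_injective [CommSemiring R] {S : Type*} [CommSemiring S] {f : R →+* S}
    (hf : Function.Injective f) (p : MvPolynomial σ R) :
    (map f p).totalDegree = p.totalDegree := by
  rw [totalDegree, totalDegree, support_map_of_injective _ hf]

theorem totalDegree_pos_of_not_isUnit [Field R] {p : MvPolynomial σ R} (hp : p ≠ 0)
    (hu : ¬IsUnit p) : 0 < p.totalDegree := by
  refine Nat.pos_of_ne_zero fun h => hu ?_
  rw [totalDegree_eq_zero_iff_eq_C.1 h] at hp ⊢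
  exact (IsUnit.mk0 _ fun h0 => hp (by rw [h0, C_0])).map C

theorem not_irreducible_of_eq_mul [CommRing R] [IsReduced R] {F G H : MvPolynomial σ R}
    {α : σ →₀ ℕ} (hFGH : F = G * H) (hα : α ≠ 0) (hGα : G.coeff α ≠ 0)
    (hG : G.totalDegree < F.totalDegree) : ¬Irreducible F := by
  classical
  intro hF
  rcases hF.isUnit_or_isUnit hFGH with hu | hu
  · rw [totalDegree_eq_zero_iff_eq_C.1 ((isUnit_iff_totalDegree_of_isReduced.1 hu).2),
      coeff_C, if_neg (Ne.symm hα)] at hGα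
    exact hGα rfl
  · have hH := (isUnit_iff_totalDegree_of_isReduced.1 hu).2
    have := hFGH ▸ totalDegree_mul G H
    omega

theorem exists_normalized_factorization [Field R] {P : MvPolynomial σ R}
    (hP : 0 < P.totalDegree) (hirr : ¬Irreducible P) :
    ∃ (α : σ →₀ ℕ) (G H : MvPolynomial σ R), 0 < α.degree ∧ α.degree < P.totalDegree ∧
      P = G * H ∧ G.totalDegree ≤ α.degree ∧ H.totalDegree ≤ P.totalDegree - α.degree ∧
      G.coeff α = 1 := by
  have hP0 : P ≠ 0 := by rintro rfl; simp at hP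
  have hPu : ¬IsUnit P := fun hu => by
    simp [(isUnit_iff_totalDegree_of_isReduced.1 hu).2] at hP
  obtain ⟨G, H, hPGH, hGu, hHu⟩ : ∃ G H, P = G * H ∧ ¬IsUnit G ∧ ¬IsUnit H := by
    simpa [irreducible_iff, hPu, not_or] using hirr
  have hG0 : G ≠ 0 := fun h => hP0 (by rw [hPGH, h, zero_mul])
  have hH0 : H ≠ 0 := fun h => hP0 (by rw [hPGH, h, mul_zero])
  have hdeg : P.totalDegree = G.totalDegree + H.totalDegree :=
    hPGH ▸ totalDegree_mul_of_isDomain hG0 hH0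
  have hGpos := totalDegree_pos_of_not_isUnit hG0 hGu
  have hHpos := totalDegree_pos_of_not_isUnit hH0 hHu
  obtain ⟨α, hαG, hGα⟩ := Finset.exists_mem_eq_sup G.support (support_nonempty.2 hG0) Finsupp.degree
  replace hGα : G.totalDegree = α.degree := hGα
  have hc : G.coeff α ≠ 0 := mem_support_iff.1 hαG
  refine ⟨α, C (G.coeff α)⁻¹ * G, C (G.coeff α) * H, by omega, by omega, ?_, ?_, ?_, ?_⟩
  · rw [hPGH, mul_mul_mul_comm, ← C_mul, inv_mul_cancel₀ hc, C_1, one_mul]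
  · rw [C_mul', ← hGα]
    exact totalDegree_smul_le _ _
  · rw [C_mul']
    exact (totalDegree_smul_le _ _).trans (by omega)
  · rw [coeff_C_mul, inv_mul_cancel₀ hc]

end Degree

section Generic

variable {σ τ R S : Type*} [CommSemiring R] [CommSemiring S]

def monomialsOfDegreeLE (σ : Type*) [Finite σ] (n : ℕ) : Finset (σ →₀ ℕ) :=
  (Finsupp.finite_of_degree_le n).toFinset

@[simp]
theorem mem_monomialsOfDegreeLE [Finite σ] {n : ℕ} {a : σ →₀ ℕ} :
    a ∈ monomialsOfDegreeLE σ n ↔ a.degree ≤ n :=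
  Set.Finite.mem_toFinset _

theorem support_subset_monomialsOfDegreeLE [Finite σ] {p : MvPolynomial σ R} {n : ℕ}
    (hp : p.totalDegree ≤ n) : p.support ⊆ monomialsOfDegreeLE σ n :=
  fun _ ha => mem_monomialsOfDegreeLE.2 ((le_totalDegree ha).trans hp)

def genericPoly (s : Finset (σ →₀ ℕ)) (v : s → τ) : MvPolynomial σ (MvPolynomial τ R) :=
  ∑ a : s, monomial (a : σ →₀ ℕ) (X (v a))

theorem map_genericPoly (s : Finset (σ →₀ ℕ)) (v : s → τ) (f : MvPolynomial τ R →+* S) :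
    map f (genericPoly s v) = ∑ a : s, monomial (a : σ →₀ ℕ) (f (X (v a))) := by
  simp only [genericPoly, map_sum, map_monomial]

theorem totalDegree_map_genericPoly_le {s : Finset (σ →₀ ℕ)} {n : ℕ}
    (hs : ∀ a ∈ s, a.degree ≤ n) (v : s → τ) (f : MvPolynomial τ R →+* S) :
    (map f (genericPoly s v)).totalDegree ≤ n := by
  rw [map_genericPoly]
  refine (totalDegree_finsetSum _ _).trans (Finset.sup_le fun a _ => ?_)
  exact (totalDegree_monomial_le _ _).trans (hs a a.2)

theorem map_genericPoly_eq {s : Finset (σ →₀ ℕ)} {p : MvPolynomial σ S} (hp : p.support ⊆ s)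
    (v : s → τ) (f : MvPolynomial τ R →+* S) (hf : ∀ a : s, f (X (v a)) = p.coeff a) :
    map f (genericPoly s v) = p := by
  rw [map_genericPoly, Finset.sum_congr rfl fun a _ => congrArg _ (hf a),
    Finset.sum_coe_sort s fun a => monomial a (p.coeff a)]
  conv_rhs => rw [p.as_sum]
  refine (Finset.sum_subset hp fun a _ ha => ?_).symm
  rw [notMem_support_iff.1 ha, monomial_zero]

end Generic

section Ideal

variable {σ R S : Type*} [CommRing R] [CommRing S]

def factorizationIdeal (F : MvPolynomial σ R) (s t : Finset (σ →₀ ℕ)) (α : σ →₀ ℕ) :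
    Ideal (MvPolynomial (s ⊕ t) R) :=
  Ideal.span <| insert (coeff α (genericPoly s Sum.inl) - 1) <|
    Set.range fun γ => coeff γ (genericPoly s Sum.inl * genericPoly t Sum.inr - map C F)

theorem factorizationIdeal_le_ker_iff {F : MvPolynomial σ R} {s t : Finset (σ →₀ ℕ)}
    {α : σ →₀ ℕ} (f : MvPolynomial (s ⊕ t) R →+* S) :
    factorizationIdeal F s t α ≤ RingHom.ker f ↔
      coeff α (map f (genericPoly s Sum.inl)) = 1 ∧
        map f (genericPoly s Sum.inl) * map f (genericPoly t Sum.inr) = map (f.comp C) F := by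
  simp only [factorizationIdeal, Ideal.span_le, Set.insert_subset_iff, Set.range_subset_iff,
    SetLike.mem_coe, RingHom.mem_ker, map_sub, map_one, ← coeff_map, sub_eq_zero, map_mul,
    map_map]
  exact and_congr Iff.rfl (by rw [← sub_eq_zero, MvPolynomial.ext_iff]; simp)

end Ideal

section Nullstellensatz

variable {σ A K L : Type*} [CommRing A] [IsDomain A] [Field K] [Algebra A K] [IsFractionRing A K]
  [Field L] [Algebra K L] [IsAlgClosed L]

attribute [local instance] algebraMvPolynomial in
theorem exists_C_mem_of_forall_not_le_ker [Finite σ] (I : Ideal (MvPolynomial σ A))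
    (hI : ∀ x : σ → L, ¬I ≤ RingHom.ker (eval₂Hom ((algebraMap K L).comp (algebraMap A K)) x)) :
    ∃ b : A, b ≠ 0 ∧ C b ∈ I := by
  set J := I.map (algebraMap (MvPolynomial σ A) (MvPolynomial σ K))
  have hJ : J = ⊤ := by
    have hempty : zeroLocus L J = ∅ := by
      refine Set.eq_empty_of_forall_notMem fun x hx => hI x fun p hp => ?_
      have := hx _ (Ideal.mem_map_of_mem _ hp)
      rwa [algebraMap_def, aeval_def, eval₂_map] at this
    rw [← Ideal.radical_eq_top, ← vanishingIdeal_zeroLocus_eq_radical (K := L), hempty,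
      vanishingIdeal_empty]
  -- `K[σ]` is the localization of `A[σ]` at the nonzero constants.
  obtain ⟨⟨⟨p, hp⟩, ⟨c, b, hb, rfl⟩⟩, hpc⟩ := (IsLocalization.mem_map_algebraMap_iff
    ((nonZeroDivisors A).map C) (MvPolynomial σ K)).1 (hJ ▸ Submodule.mem_top : (1 : _) ∈ J)
  have hinj : Function.Injective (algebraMap (MvPolynomial σ A) (MvPolynomial σ K)) :=
    map_injective _ (IsFractionRing.injective A K)
  refine ⟨b, nonZeroDivisors.ne_zero hb, ?_⟩
  rw [one_mul, hinj.eq_iff] at hpc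
  rwa [show C b = p from hpc]

end Nullstellensatz

section BertiniNoether

variable {σ A K L k : Type*} [Finite σ] [CommRing A] [IsDomain A] [Field K] [Algebra A K]
  [IsFractionRing A K] [Field L] [Algebra K L] [IsAlgClosed L]

theorem exists_ne_zero_forall_factorization_map_eq_zero [CommRing k] {F : MvPolynomial σ A}
    (hF : Irreducible (map ((algebraMap K L).comp (algebraMap A K)) F)) {α : σ →₀ ℕ}
    (hα : 0 < α.degree) (hαF : α.degree < F.totalDegree) :
    ∃ b : A, b ≠ 0 ∧ ∀ (φ : A →+* k) (G H : MvPolynomial σ k), map φ F = G * H →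
      G.totalDegree ≤ α.degree → H.totalDegree ≤ F.totalDegree - α.degree → G.coeff α = 1 →
      φ b = 0 := by
  have hψ : Function.Injective ((algebraMap K L).comp (algebraMap A K)) :=
    (algebraMap K L).injective.comp (IsFractionRing.injective A K)
  set s := monomialsOfDegreeLE σ α.degree
  set t := monomialsOfDegreeLE σ (F.totalDegree - α.degree)
  obtain ⟨b, hb, hbI⟩ := exists_C_mem_of_forall_not_le_ker (K := K) (L := L)
    (factorizationIdeal F s t α) fun x hx => by
      rw [factorizationIdeal_le_ker_iff, eval₂Hom_comp_C] at hx
      obtain ⟨hxα, hxF⟩ := hx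
      refine not_irreducible_of_eq_mul (α := α) hxF.symm (by rintro rfl; simp at hα)
        (by rw [hxα]; exact one_ne_zero) ?_ hF
      rw [totalDegree_map_of_injective hψ]
      exact (totalDegree_map_genericPoly_le (fun _ ha => mem_monomialsOfDegreeLE.1 ha) _ _).trans_lt
        hαF
  refine ⟨b, hb, fun φ G H hFGH hG hH hGα => ?_⟩
  set f := eval₂Hom φ (Sum.elim (fun a : s => G.coeff a) fun a : t => H.coeff a)
  have hle : factorizationIdeal F s t α ≤ RingHom.ker f := by
    rw [factorizationIdeal_le_ker_iff,
      map_genericPoly_eq (support_subset_monomialsOfDegreeLE hG) Sum.inl f fun _ => eval₂Hom_X' ..,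
      map_genericPoly_eq (support_subset_monomialsOfDegreeLE hH) Sum.inr f fun _ => eval₂Hom_X' ..,
      eval₂Hom_comp_C]
    exact ⟨hGα, hFGH.symm⟩
  simpa only [f, RingHom.mem_ker, eval₂Hom_C] using hle hbI

theorem exists_ne_zero_forall_irreducible_map [Field k] (F : MvPolynomial σ A)
    (hF : Irreducible (map ((algebraMap K L).comp (algebraMap A K)) F)) :
    ∃ h : A, h ≠ 0 ∧ ∀ φ : A →+* k, φ h ≠ 0 →
      (map φ F).totalDegree = F.totalDegree → Irreducible (map φ F) := by
  have hψ : Function.Injective ((algebraMap K L).comp (algebraMap A K)) :=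
    (algebraMap K L).injective.comp (IsFractionRing.injective A K)
  have hd : 0 < F.totalDegree :=
    totalDegree_map_of_injective hψ F ▸ totalDegree_pos_of_not_isUnit hF.ne_zero hF.not_isUnit
  set S := (monomialsOfDegreeLE σ F.totalDegree).filter
    fun α => 0 < α.degree ∧ α.degree < F.totalDegree
  have hS : ∀ α ∈ S, 0 < α.degree ∧ α.degree < F.totalDegree := fun α hα =>
    (Finset.mem_filter.1 hα).2
  choose! b hb0 hb using fun α hα =>
    exists_ne_zero_forall_factorization_map_eq_zero (k := k) hF (hS α hα).1 (hS α hα).2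
  refine ⟨∏ α ∈ S, b α, Finset.prod_ne_zero_iff.2 hb0, fun φ hφ hdeg => ?_⟩
  by_contra hirr
  obtain ⟨α, G, H, hα0, hαd, hFGH, hG, hH, hGα⟩ :=
    exists_normalized_factorization (hdeg ▸ hd) hirr
  rw [hdeg] at hαd hH
  have hαS : α ∈ S := Finset.mem_filter.2 ⟨mem_monomialsOfDegreeLE.2 hαd.le, hα0, hαd⟩
  exact hφ (by rw [map_prod]; exact Finset.prod_eq_zero hαS (hb α hαS φ G H hFGH hG hH hGα))

end BertiniNoether

end MvPolynomial

theorem stmt14_general {k : Type*} [Field k] (s l : ℕ)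
    (F : MvPolynomial (Fin l) (MvPolynomial (Fin s) k))
    (hF : Irreducible (MvPolynomial.map
      ((algebraMap (FractionRing (MvPolynomial (Fin s) k))
          (AlgebraicClosure (FractionRing (MvPolynomial (Fin s) k)))).comp
        (algebraMap (MvPolynomial (Fin s) k) (FractionRing (MvPolynomial (Fin s) k)))) F)) :
    ∃ h : MvPolynomial (Fin s) k, h ≠ 0 ∧
      ∀ t : Fin s → k, MvPolynomial.eval t h ≠ 0 →
        (MvPolynomial.map (MvPolynomial.eval t) F).totalDegree = F.totalDegree →
        Irreducible (MvPolynomial.map (MvPolynomial.eval t) F) := by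
  obtain ⟨h, hh, hirr⟩ := exists_ne_zero_forall_irreducible_map (k := k) F hF
  exact ⟨h, hh, fun t => hirr (eval t)⟩

theorem stmt14 {k : Type*} [Field k] [IsAlgClosed k] (s l : ℕ) (hl : 2 ≤ l)
    (F : MvPolynomial (Fin l) (MvPolynomial (Fin s) k))
    (hF : Irreducible (MvPolynomial.map
      ((algebraMap (FractionRing (MvPolynomial (Fin s) k))
          (AlgebraicClosure (FractionRing (MvPolynomial (Fin s) k)))).comp
        (algebraMap (MvPolynomial (Fin s) k) (FractionRing (MvPolynomial (Fin s) k)))) F)) :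
    ∃ h : MvPolynomial (Fin s) k, h ≠ 0 ∧
      ∀ t : Fin s → k, MvPolynomial.eval t h ≠ 0 →
        (MvPolynomial.map (MvPolynomial.eval t) F).totalDegree = F.totalDegree →
        Irreducible (MvPolynomial.map (MvPolynomial.eval t) F) :=
  stmt14_general s l F hF
end
end
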